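/- arXiv:2502.10297 — 3 statements merged into one kernel-verified Lean document; each statement's English description precedes it below -/
import Mathlib

section
/- Let k_1, k_2 ∈ ℝ^n be unit vectors with x = (k_1ᵀ k_2)² satisfying 0 < x < 1, and let β_1, β_2 ∈ (1, 2]. If (√(β_1 − 1) − √(β_2 − 1))² < β_1 β_2 x < (√(β_1 − 1) + √(β_2 − 1))², then the matrix A = (I − β_1 k_1 k_1ᵀ)(I − β_2 k_2 k_2ᵀ) has a complex eigenvalue that is not real. -/
open Matrix

/-- The generalized Householder matrix `I − β k kᵀ`. -/
noncomputable def house {n : ℕ} (β : ℝ) (k : Fin n → ℝ) : Matrix (Fin n) (Fin n) ℝ :=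
  1 - β • vecMulVec k k

/-- `μ ∈ ℂ` is an eigenvalue of the complexification of the real matrix `A`. -/
def hasEigC {n : ℕ} (A : Matrix (Fin n) (Fin n) ℝ) (μ : ℂ) : Prop :=
  Module.End.HasEigenvalue (Matrix.toLin' (A.map (fun x => (x : ℂ)))) μ

/-- If `0 < (k₁ᵀk₂)² < 1`, `β₁, β₂ ∈ (1,2]` and `β₁β₂ (k₁ᵀk₂)²` lies strictly between
`(√(β₁−1) − √(β₂−1))²` and `(√(β₁−1) + √(β₂−1))²`, then
`A = (I − β₁ k₁ k₁ᵀ)(I − β₂ k₂ k₂ᵀ)` has a non-real complex eigenvalue. -/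
theorem householder_pair_complex_eigenvalue {n : ℕ} (k₁ k₂ : Fin n → ℝ)
    (hk₁ : k₁ ⬝ᵥ k₁ = 1) (hk₂ : k₂ ⬝ᵥ k₂ = 1)
    (hx0 : 0 < (k₁ ⬝ᵥ k₂) ^ 2) (hx1 : (k₁ ⬝ᵥ k₂) ^ 2 < 1)
    (β₁ β₂ : ℝ) (hβ₁ : β₁ ∈ Set.Ioc (1 : ℝ) 2) (hβ₂ : β₂ ∈ Set.Ioc (1 : ℝ) 2)
    (hlo : (Real.sqrt (β₁ - 1) - Real.sqrt (β₂ - 1)) ^ 2 < β₁ * β₂ * (k₁ ⬝ᵥ k₂) ^ 2)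
    (hhi : β₁ * β₂ * (k₁ ⬝ᵥ k₂) ^ 2 < (Real.sqrt (β₁ - 1) + Real.sqrt (β₂ - 1)) ^ 2) :
    ∃ μ : ℂ, hasEigC (house β₁ k₁ * house β₂ k₂) μ ∧ μ.im ≠ 0 := by
  classical
  obtain ⟨hβ₁1, hβ₁2⟩ := hβ₁
  obtain ⟨hβ₂1, hβ₂2⟩ := hβ₂
  set c : ℝ := k₁ ⬝ᵥ k₂ with hcdef
  have ha0 : (0:ℝ) ≤ β₁ - 1 := by linarith
  have hb0 : (0:ℝ) ≤ β₂ - 1 := by linarith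
  set t : ℝ := β₁ * β₂ * c ^ 2 - (β₁ - 1) - (β₂ - 1) with htdef
  set D : ℝ := 4 * ((β₁ - 1) * (β₂ - 1)) - t ^ 2 with hDdef
  have hs1 : Real.sqrt (β₁ - 1) ^ 2 = β₁ - 1 := Real.sq_sqrt ha0
  have hs2 : Real.sqrt (β₂ - 1) ^ 2 = β₂ - 1 := Real.sq_sqrt hb0
  have hDpos : 0 < D := by
    have h1 : t < 2 * (Real.sqrt (β₁ - 1) * Real.sqrt (β₂ - 1)) := by nlinarith
    have h2 : -(2 * (Real.sqrt (β₁ - 1) * Real.sqrt (β₂ - 1))) < t := by nlinarith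
    nlinarith [mul_pos (by linarith : (0:ℝ) < 2 * (Real.sqrt (β₁ - 1) * Real.sqrt (β₂ - 1)) - t)
      (by linarith : (0:ℝ) < 2 * (Real.sqrt (β₁ - 1) * Real.sqrt (β₂ - 1)) + t)]
  set s : ℝ := Real.sqrt D with hsdef
  have hs0 : 0 < s := Real.sqrt_pos.mpr hDpos
  have hssq : s ^ 2 = D := Real.sq_sqrt hDpos.le
  set μ : ℂ := (t : ℂ) / 2 + ((s : ℂ) / 2) * Complex.I with hμdef
  have hμim : μ.im = s / 2 := by simp [hμdef]
  have hkey : μ ^ 2 - (t : ℂ) * μ + ((β₁ : ℂ) - 1) * ((β₂ : ℂ) - 1) = 0 := by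
    have h1 : ((s : ℂ)) ^ 2 = 4 * ((β₁ : ℂ) - 1) * ((β₂ : ℂ) - 1) - (t : ℂ) ^ 2 := by
      have : ((s ^ 2 : ℝ) : ℂ) = ((D : ℝ) : ℂ) := by exact_mod_cast congrArg Complex.ofReal hssq
      push_cast at this
      rw [this, hDdef]
      push_cast
      ring
    rw [hμdef]
    linear_combination ((s : ℂ) ^ 2 / 4) * Complex.I_sq + (-(1:ℂ)/4) * h1
  -- complexified vectors
  set K₁ : Fin n → ℂ := fun i => ((k₁ i : ℝ) : ℂ) with hK₁def
  set K₂ : Fin n → ℂ := fun i => ((k₂ i : ℝ) : ℂ) with hK₂def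
  have hdot : ∀ u w : Fin n → ℝ,
      (fun i => ((u i : ℝ) : ℂ)) ⬝ᵥ (fun i => ((w i : ℝ) : ℂ)) = ((u ⬝ᵥ w : ℝ) : ℂ) := by
    intro u w
    simp only [dotProduct]
    push_cast
    ring
  have hK11 : K₁ ⬝ᵥ K₁ = 1 := by rw [hK₁def, hdot, hk₁]; simp
  have hK22 : K₂ ⬝ᵥ K₂ = 1 := by rw [hK₂def, hdot, hk₂]; simp
  have hK12 : K₁ ⬝ᵥ K₂ = (c : ℂ) := by rw [hK₁def, hK₂def, hdot]
  have hK21 : K₂ ⬝ᵥ K₁ = (c : ℂ) := by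
    rw [hK₂def, hK₁def, hdot, dotProduct_comm]
  -- house complexified
  have hmapH : ∀ (β : ℝ) (k : Fin n → ℝ), (house β k).map (fun x => (x : ℂ)) =
      (1 : Matrix (Fin n) (Fin n) ℂ) - (β : ℂ) • vecMulVec (fun i => ((k i : ℝ) : ℂ)) (fun i => ((k i : ℝ) : ℂ)) := by
    intro β k
    ext i j
    simp only [house, Matrix.map_apply, Matrix.sub_apply, Matrix.smul_apply, vecMulVec_apply,
      Matrix.one_apply, smul_eq_mul]
    split_ifs <;> push_cast <;> ring
  have hmv : ∀ (β : ℂ) (K w : Fin n → ℂ),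
      ((1 : Matrix (Fin n) (Fin n) ℂ) - β • vecMulVec K K) *ᵥ w
        = w - (β * (K ⬝ᵥ w)) • K := by
    intro β K w
    have hvv : (vecMulVec K K) *ᵥ w = fun i => (K ⬝ᵥ w) * K i := by
      funext i
      simp only [Matrix.mulVec, dotProduct, vecMulVec_apply]
      rw [Finset.sum_mul]
      exact Finset.sum_congr rfl fun j _ => by ring
    rw [Matrix.sub_mulVec, Matrix.smul_mulVec, Matrix.one_mulVec, hvv]
    funext i
    simp [mul_assoc]
  set a : ℂ := ((β₁ * c * (β₂ - 1) : ℝ) : ℂ) with hadef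
  set e : ℂ := μ - ((1 - β₁ + β₁ * β₂ * c ^ 2 : ℝ) : ℂ) with hedef
  set v : Fin n → ℂ := fun i => a * K₁ i + e * K₂ i with hvdef
  have hlin : ∀ K : Fin n → ℂ, K ⬝ᵥ v = a * (K ⬝ᵥ K₁) + e * (K ⬝ᵥ K₂) := by
    intro K
    simp only [hvdef, dotProduct, Finset.mul_sum]
    rw [← Finset.sum_add_distrib]
    exact Finset.sum_congr rfl fun j _ => by ring
  have hd2 : K₂ ⬝ᵥ v = a * (c : ℂ) + e := by rw [hlin, hK21, hK22, mul_one]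
  have hd1 : K₁ ⬝ᵥ v = a + e * (c : ℂ) := by rw [hlin, hK11, hK12, mul_one]
  -- main computation
  have hAv : ((house β₁ k₁ * house β₂ k₂).map (fun x => (x : ℂ))) *ᵥ v = μ • v := by
    have hmul : (house β₁ k₁ * house β₂ k₂).map (fun x => (x : ℂ))
        = ((house β₁ k₁).map (fun x => (x : ℂ))) * ((house β₂ k₂).map (fun x => (x : ℂ))) :=
      Matrix.map_mul (f := Complex.ofRealHom)
    rw [hmul, hmapH, hmapH, ← hK₁def, ← hK₂def, ← Matrix.mulVec_mulVec, hmv, hmv, hd2]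
    set q : ℂ := (β₂ : ℂ) * (a * (c : ℂ) + e) with hqdef
    have hw : v - q • K₂ = fun i => a * K₁ i + (e - q) * K₂ i := by
      funext i
      simp [hvdef]
      ring
    rw [hw]
    have hw2 : K₁ ⬝ᵥ (fun i => a * K₁ i + (e - q) * K₂ i) = a + (e - q) * (c : ℂ) := by
      have : K₁ ⬝ᵥ (fun i => a * K₁ i + (e - q) * K₂ i)
          = a * (K₁ ⬝ᵥ K₁) + (e - q) * (K₁ ⬝ᵥ K₂) := by
        simp only [dotProduct, Finset.mul_sum]
        rw [← Finset.sum_add_distrib]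
        exact Finset.sum_congr rfl fun j _ => by ring
      rw [this, hK11, hK12, mul_one]
    rw [hw2]
    have hc1 : a - (β₁ : ℂ) * (a + (e - q) * (c : ℂ)) = μ * a := by
      rw [hqdef, hadef, hedef]
      push_cast
      ring
    have hc2 : e - q = μ * e := by
      have htC : (t : ℂ) = (β₁ : ℂ) * (β₂ : ℂ) * (c : ℂ) ^ 2 - ((β₁ : ℂ) - 1) - ((β₂ : ℂ) - 1) := by
        rw [htdef]; push_cast; ring
      rw [hqdef, hadef, hedef]
      push_cast
      linear_combination -hkey - μ * htC
    funext i
    simp only [Pi.sub_apply, Pi.smul_apply, smul_eq_mul, hvdef]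
    have : a * K₁ i + (e - q) * K₂ i - ((β₁:ℂ) * (a + (e - q) * (c:ℂ))) * K₁ i
        = (a - (β₁ : ℂ) * (a + (e - q) * (c : ℂ))) * K₁ i + (e - q) * K₂ i := by ring
    rw [this, hc1, hc2]
    ring
  have hvne : v ≠ 0 := by
    intro h0
    have hz : K₂ ⬝ᵥ v = 0 := by rw [h0]; simp
    rw [hd2] at hz
    have him := congrArg Complex.im hz
    simp [hadef, hedef, hμim, ← Complex.ofReal_pow] at him
    linarith
  refine ⟨μ, ?_, ?_⟩
  · unfold hasEigC
    apply Module.End.hasEigenvalue_of_hasEigenvector (x := v)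
    refine ⟨?_, hvne⟩
    rw [Module.End.mem_eigenspace_iff, Matrix.toLin'_apply]
    exact hAv
  · rw [hμim]
    positivity
end

section
/- Let k_1, k_2 ∈ ℝ^n be unit vectors and β_1, β_2 ∈ [0,2]. If β_1 ∈ [0,1] or β_2 ∈ [0,1], then every complex eigenvalue of the matrix A = (I − β_1 k_1 k_1ᵀ)(I − β_2 k_2 k_2ᵀ) is real. -/
/-!
If `v` is an eigenvector for `μ` of `(1 - a • u uᵀ) (1 - b • w wᵀ)` with `u, w` unit vectors,
then either `v ⟂ u, w` and `μ = 1`, or `(u ⬝ᵥ v, w ⬝ᵥ v)` is a nonzero kernel vector of a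
`2 × 2` matrix whose determinant is `z² - (a + b - a b s) z + a b (1 - s)` with `z = 1 - μ`
and `s = (u ⬝ᵥ w)² ∈ [0, 1]`. Its discriminant equals `(2 - a - b + a b s)² - 4 (1 - a)(1 - b)`,
so, given `a ≤ 1` or `b ≤ 1`, it can only be negative when `a, b < 1`; then it equals
`(a - b)² + a b s (4 - 2a - 2b + a b s)`, nonnegative when `a b ≥ 0`, while for `a b < 0` it is
visibly `(a + b - a b s)² - 4 a b (1 - s) ≥ 0`. Hence the real quadratic has real roots.
-/

open Matrix

theorem sq_dotProduct_le_dotProduct_self_mul {ι R : Type*} [Fintype ι] [CommRing R]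
    [LinearOrder R] [IsStrictOrderedRing R] (u w : ι → R) :
    (u ⬝ᵥ w) ^ 2 ≤ (u ⬝ᵥ u) * (w ⬝ᵥ w) := by
  simpa [dotProduct, sq] using Finset.sum_mul_sq_le_sq_mul_sq Finset.univ u w

theorem householder_pair_discrim_nonneg {a b s : ℝ} (hs : s ∈ Set.Icc (0 : ℝ) 1)
    (h : a ≤ 1 ∨ b ≤ 1) : 0 ≤ discrim 1 (-(a + b - a * b * s)) (a * b * (1 - s)) := by
  obtain ⟨hs0, hs1⟩ := hs
  rcases le_or_gt ((1 - a) * (1 - b)) 0 with h1ab | h1ab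
  · have hD : discrim 1 (-(a + b - a * b * s)) (a * b * (1 - s))
        = (2 - (a + b - a * b * s)) ^ 2 - 4 * ((1 - a) * (1 - b)) := by rw [discrim]; ring
    rw [hD]
    linarith [sq_nonneg (2 - (a + b - a * b * s))]
  rcases le_or_gt (a * b) 0 with hab | hab
  · rw [discrim]
    nlinarith [sq_nonneg (a + b - a * b * s),
      mul_nonpos_of_nonpos_of_nonneg hab (sub_nonneg.2 hs1)]
  obtain ⟨ha1, hb1⟩ : 0 < 1 - a ∧ 0 < 1 - b :=
    (pos_and_pos_or_neg_and_neg_of_mul_pos h1ab).resolve_right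
      (by rintro ⟨_, _⟩; rcases h with h | h <;> linarith)
  have hD : discrim 1 (-(a + b - a * b * s)) (a * b * (1 - s))
      = (a - b) ^ 2 + a * b * s * (4 - 2 * a - 2 * b + a * b * s) := by rw [discrim]; ring
  have habs : 0 ≤ a * b * s := mul_nonneg hab.le hs0
  rw [hD]
  nlinarith [sq_nonneg (a - b)]

theorem Complex.im_eq_zero_of_quadratic_eq_zero {a b c : ℝ} (ha : a ≠ 0)
    (hdisc : 0 ≤ discrim a b c) {z : ℂ} (hz : a * (z * z) + b * z + c = 0) : z.im = 0 := by
  set s := √(discrim a b c)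
  have hs : discrim (a : ℂ) b c = s * s := by
    rw [← ofReal_mul, Real.mul_self_sqrt hdisc]
    simp [discrim]
  rcases (quadratic_eq_zero_iff (ofReal_ne_zero.mpr ha) hs z).mp hz with rfl | rfl <;>
    norm_cast

theorem det_eq_zero_of_mul_add_mul_eq_zero {K : Type*} [Field K] {p q r s x y : K}
    (h₁ : p * x + q * y = 0) (h₂ : r * x + s * y = 0) (hxy : ¬(x = 0 ∧ y = 0)) :
    p * s - q * r = 0 := by
  have hker : !![p, q; r, s] *ᵥ ![x, y] = 0 := by
    ext i
    fin_cases i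
    exacts [by simpa [mul_comm] using h₁, by simpa [mul_comm] using h₂]
  have hdet := (exists_mulVec_eq_zero_iff (M := !![p, q; r, s])).mp
    ⟨![x, y], by simpa [funext_iff] using hxy, hker⟩
  rwa [det_fin_two_of] at hdet

theorem one_sub_smul_vecMulVec_self_mulVec {ι K : Type*} [Fintype ι] [DecidableEq ι]
    [CommRing K] (c : K) (u v : ι → K) :
    (1 - c • vecMulVec u u) *ᵥ v = v - (c * (u ⬝ᵥ v)) • u := by
  rw [sub_mulVec, one_mulVec, smul_mulVec, vecMulVec_mulVec, op_smul_eq_smul, smul_smul]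

theorem eq_one_or_quadratic_of_householder_pair_mulVec {ι K : Type*} [Fintype ι]
    [DecidableEq ι] [Field K] {a b μ : K} {u w v : ι → K} (hu : u ⬝ᵥ u = 1)
    (hw : w ⬝ᵥ w = 1) (hv : v ≠ 0)
    (h : ((1 - a • vecMulVec u u) * (1 - b • vecMulVec w w)) *ᵥ v = μ • v) :
    μ = 1 ∨ 1 * ((1 - μ) * (1 - μ)) + -(a + b - a * b * (u ⬝ᵥ w) ^ 2) * (1 - μ)
      + a * b * (1 - (u ⬝ᵥ w) ^ 2) = 0 := by
  set c := u ⬝ᵥ w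
  set x := u ⬝ᵥ v
  set y := w ⬝ᵥ v
  have hv' : μ • v = v - (b * y) • w - (a * (x - b * y * c)) • u := by
    rw [← h, ← mulVec_mulVec, one_sub_smul_vecMulVec_self_mulVec,
      one_sub_smul_vecMulVec_self_mulVec, dotProduct_sub, dotProduct_smul, smul_eq_mul]
  have hx : (1 - μ - a) * x + -(b * c * (1 - a)) * y = 0 := by
    have := congrArg (u ⬝ᵥ ·) hv'
    simp only [dotProduct_sub, dotProduct_smul, smul_eq_mul, hu] at this
    linear_combination -this
  have hy : -(a * c) * x + (1 - μ - b + a * b * c ^ 2) * y = 0 := by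
    have := congrArg (w ⬝ᵥ ·) hv'
    simp only [dotProduct_sub, dotProduct_smul, smul_eq_mul, hw, dotProduct_comm w u] at this
    linear_combination -this
  by_cases hxy : x = 0 ∧ y = 0
  · left
    rw [hxy.1, hxy.2] at hv'
    refine smul_left_injective K hv ?_
    simpa using hv'
  · right
    linear_combination det_eq_zero_of_mul_add_mul_eq_zero hx hy hxy

theorem map_house {n : ℕ} {R : Type*} [Ring R] (f : ℝ →+* R) (β : ℝ) (k : Fin n → ℝ) :
    (house β k).map f = 1 - f β • vecMulVec (f ∘ k) (f ∘ k) := by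
  ext i j
  simp [house, vecMulVec_apply, one_apply, apply_ite f]

theorem householder_pair_real_eigenvalues_general {n : ℕ} (k₁ k₂ : Fin n → ℝ)
    (hk₁ : k₁ ⬝ᵥ k₁ = 1) (hk₂ : k₂ ⬝ᵥ k₂ = 1)
    (β₁ β₂ : ℝ)
    (h : β₁ ∈ Set.Icc (0 : ℝ) 1 ∨ β₂ ∈ Set.Icc (0 : ℝ) 1) :
    ∀ μ : ℂ, hasEigC (house β₁ k₁ * house β₂ k₂) μ → μ.im = 0 := by
  intro μ hμ
  obtain ⟨v, hv⟩ := hμ.exists_hasEigenvector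
  have hAv := hv.apply_eq_smul
  rw [toLin'_apply, show (fun x : ℝ => (x : ℂ)) = ⇑Complex.ofRealHom from rfl, Matrix.map_mul,
    map_house, map_house] at hAv
  have hunit (k : Fin n → ℝ) (hk : k ⬝ᵥ k = 1) :
      Complex.ofRealHom ∘ k ⬝ᵥ Complex.ofRealHom ∘ k = 1 := by
    rw [← RingHom.map_dotProduct, hk, map_one]
  rcases eq_one_or_quadratic_of_householder_pair_mulVec (hunit k₁ hk₁) (hunit k₂ hk₂) hv.2 hAv
    with rfl | hquad
  · simp
  rw [← RingHom.map_dotProduct] at hquad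
  have hs : (k₁ ⬝ᵥ k₂) ^ 2 ∈ Set.Icc (0 : ℝ) 1 :=
    ⟨sq_nonneg _, by simpa [hk₁, hk₂] using sq_dotProduct_le_dotProduct_self_mul k₁ k₂⟩
  have him := Complex.im_eq_zero_of_quadratic_eq_zero one_ne_zero
    (householder_pair_discrim_nonneg hs (h.imp And.right And.right)) (z := 1 - μ)
    (by push_cast; simpa using hquad)
  simpa using him

/-- For unit vectors `k₁, k₂` and `β₁, β₂ ∈ [0,2]` with `β₁ ∈ [0,1]` or `β₂ ∈ [0,1]`,
every complex eigenvalue of `(I − β₁ k₁ k₁ᵀ)(I − β₂ k₂ k₂ᵀ)` is real. -/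
theorem householder_pair_real_eigenvalues {n : ℕ} (k₁ k₂ : Fin n → ℝ)
    (hk₁ : k₁ ⬝ᵥ k₁ = 1) (hk₂ : k₂ ⬝ᵥ k₂ = 1)
    (β₁ β₂ : ℝ) (hβ₁ : β₁ ∈ Set.Icc (0 : ℝ) 2) (hβ₂ : β₂ ∈ Set.Icc (0 : ℝ) 2)
    (h : β₁ ∈ Set.Icc (0 : ℝ) 1 ∨ β₂ ∈ Set.Icc (0 : ℝ) 1) :
    ∀ μ : ℂ, hasEigC (house β₁ k₁ * house β₂ k₂) μ → μ.im = 0 :=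
  householder_pair_real_eigenvalues_general k₁ k₂ hk₁ hk₂ β₁ β₂ h
end

section
/- Let S ⊂ ℝ be a finite set with at least two elements, δ_min = min{|x − y| : x, y ∈ S, x ≠ y} and δ_max = max{|x − y| : x, y ∈ S}. Fix b ≥ δ_max/δ_min + 1, let b⃗ = (b, b², …, b^d)ᵀ ∈ ℝ^d and q = b⃗/‖b⃗‖₂. Fix a ≠ 0 and ε > 0 and define the scalar RMS-normalization g₃(x) = a·x/√(ε + x²). Then the map f : S^d → ℝ given by f(H) = g₃(Hᵀ q) is injective. -/
/-!
`g₃` is injective, since `x` can be recovered from `u = x / √(ε + x²)` as `u √(ε / (1 - u²))`,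
and normalizing `b⃗` only rescales the readout by a nonzero constant, so it suffices that
`H ↦ ∑ Hᵢ bⁱ` is injective on `S^d`. If `H ≠ H'`, the top index where they differ carries a
term of size at least `δ_min bⁿ`, while the lower differences contribute at most
`δ_max (bⁿ - 1)/(b - 1) ≤ δ_min (bⁿ - 1)`: the base-`b` expansion with digits in `S` is unique.
-/

open Matrix Finset

theorem div_sqrt_add_sq_leftInverse {ε : ℝ} (hε : 0 < ε) :
    Function.LeftInverse (fun u : ℝ => u * √(ε / (1 - u ^ 2))) (fun x => x / √(ε + x ^ 2)) := by
  intro x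
  have hs : 0 < √(ε + x ^ 2) := Real.sqrt_pos.2 (by positivity)
  have hsq : √(ε + x ^ 2) ^ 2 = ε + x ^ 2 := Real.sq_sqrt (by positivity)
  have hrecover : ε / (1 - (x / √(ε + x ^ 2)) ^ 2) = ε + x ^ 2 := by
    rw [div_pow, hsq, one_sub_div (by positivity), add_sub_cancel_right, div_div_eq_mul_div,
      mul_div_cancel_left₀ _ hε.ne']
  simp only [hrecover, div_mul_cancel₀ _ hs.ne']

theorem injective_mul_div_sqrt_add_sq {a ε : ℝ} (ha : a ≠ 0) (hε : 0 < ε) :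
    Function.Injective (fun x : ℝ => a * x / √(ε + x ^ 2)) := by
  intro x y h
  simp only [mul_div_assoc] at h
  exact (div_sqrt_add_sq_leftInverse hε).injective (mul_left_cancel₀ ha h)

theorem dotProduct_eq_of_dotProduct_normalize_eq {ι : Type*} [Fintype ι] {u v w : ι → ℝ}
    (h : v ⬝ᵥ (√(u ⬝ᵥ u))⁻¹ • u = w ⬝ᵥ (√(u ⬝ᵥ u))⁻¹ • u) : v ⬝ᵥ u = w ⬝ᵥ u := by
  rcases eq_or_ne u 0 with rfl | hu
  · simp
  · have hpos : 0 < u ⬝ᵥ u := (Fintype.sum_nonneg fun i => mul_self_nonneg (u i)).lt_of_ne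
      (Ne.symm (dotProduct_self_eq_zero.not.2 hu))
    have hnorm : (√(u ⬝ᵥ u))⁻¹ ≠ 0 := inv_ne_zero (Real.sqrt_pos.2 hpos).ne'
    simpa [hnorm] using h

theorem abs_sum_mul_pow_lt {d : ℕ} {D : Fin d → ℝ} {M m b : ℝ} (hD : ∀ i, |D i| ≤ M)
    (hMm : M ≤ m * (b - 1)) (hm : 0 < m) (hb : 0 ≤ b) :
    |∑ i, D i * b ^ (i : ℕ)| < m * b ^ d := by
  have hgeom : (∑ i : Fin d, b ^ (i : ℕ)) * (b - 1) = b ^ d - 1 := by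
    rw [Fin.sum_univ_eq_sum_range (fun i => b ^ i) d, geom_sum_mul]
  calc |∑ i, D i * b ^ (i : ℕ)|
      ≤ ∑ i : Fin d, |D i| * b ^ (i : ℕ) := by
        simpa only [abs_mul, abs_pow, abs_of_nonneg hb] using
          abs_sum_le_sum_abs (fun i => D i * b ^ (i : ℕ)) univ
    _ ≤ ∑ i : Fin d, M * b ^ (i : ℕ) := by gcongr with i; exact hD i
    _ ≤ m * (b - 1) * ∑ i : Fin d, b ^ (i : ℕ) := by
        rw [← mul_sum]; gcongr
    _ = m * b ^ d - m := by rw [mul_assoc, mul_comm (b - 1), hgeom]; ring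
    _ < m * b ^ d := by linarith

theorem eq_zero_of_sum_mul_pow_eq_zero {d : ℕ} {D : Fin d → ℝ} {M m b : ℝ}
    (hD : ∀ i, |D i| ≤ M) (hDm : ∀ i, D i ≠ 0 → m ≤ |D i|) (hMm : M ≤ m * (b - 1))
    (hm : 0 < m) (hb : 0 ≤ b) (hsum : ∑ i, D i * b ^ (i : ℕ) = 0) : D = 0 := by
  induction d with
  | zero => exact Subsingleton.elim _ _
  | succ d ih =>
    simp only [Fin.sum_univ_castSucc, Fin.val_last, Fin.val_castSucc] at hsum
    have hlast : D (Fin.last d) = 0 := by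
      by_contra hne
      have hlow := hDm _ hne
      have hhigh := abs_sum_mul_pow_lt (fun i => hD (Fin.castSucc i)) hMm hm hb
      rw [eq_neg_of_add_eq_zero_left hsum, abs_neg, abs_mul, abs_of_nonneg (pow_nonneg hb _)]
        at hhigh
      linarith [mul_le_mul_of_nonneg_right hlow (pow_nonneg hb d)]
    have hinit : D ∘ Fin.castSucc = 0 :=
      ih (fun i => hD _) (fun i => hDm _) (by simpa [hlast] using hsum)
    funext i
    cases i using Fin.lastCases with
    | last => exact hlast
    | cast i => exact congrFun hinit i

theorem eq_of_sum_mul_pow_eq {d : ℕ} {S : Set ℝ} {δmin δmax b : ℝ} (hδmin : 0 < δmin)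
    (hsep : ∀ x ∈ S, ∀ y ∈ S, x ≠ y → δmin ≤ |x - y|)
    (hdiam : ∀ x ∈ S, ∀ y ∈ S, |x - y| ≤ δmax) (hb : δmax ≤ δmin * (b - 1)) (hb0 : 0 ≤ b)
    {H H' : Fin d → ℝ} (hH : ∀ i, H i ∈ S) (hH' : ∀ i, H' i ∈ S)
    (h : ∑ i, H i * b ^ (i : ℕ) = ∑ i, H' i * b ^ (i : ℕ)) : H = H' :=
  sub_eq_zero.1 <| eq_zero_of_sum_mul_pow_eq_zero (fun i => hdiam _ (hH i) _ (hH' i))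
    (fun i hi => hsep _ (hH i) _ (hH' i) (sub_ne_zero.1 hi)) hb hδmin hb0
    (by simp [sub_mul, h])

theorem rmsnorm_readout_injective_general {d : ℕ} (S : Finset ℝ)
    (δmin δmax b : ℝ)
    (hmin : IsLeast {r : ℝ | ∃ x ∈ S, ∃ y ∈ S, x ≠ y ∧ r = |x - y|} δmin)
    (hmax : IsGreatest {r : ℝ | ∃ x ∈ S, ∃ y ∈ S, r = |x - y|} δmax)
    (hb : δmax / δmin + 1 ≤ b)
    (a ε : ℝ) (ha : a ≠ 0) (hε : 0 < ε)
    (bvec q : Fin d → ℝ)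
    (hbvec : bvec = fun i : Fin d => b ^ ((i : ℕ) + 1))
    (hq : q = (Real.sqrt (bvec ⬝ᵥ bvec))⁻¹ • bvec) :
    Set.InjOn (fun H : Fin d → ℝ => a * (H ⬝ᵥ q) / Real.sqrt (ε + (H ⬝ᵥ q) ^ 2))
      {H : Fin d → ℝ | ∀ i, H i ∈ S} := by
  intro H hH H' hH' heq
  have hdot : H ⬝ᵥ bvec = H' ⬝ᵥ bvec :=
    dotProduct_eq_of_dotProduct_normalize_eq (hq ▸ injective_mul_div_sqrt_add_sq ha hε heq)
  obtain ⟨⟨x, hx, y, hy, hxy, hxy_dist⟩, hsep⟩ := hmin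
  have hδmin : 0 < δmin := hxy_dist ▸ abs_pos.2 (sub_ne_zero.2 hxy)
  have hδmax : δmin ≤ δmax := hmax.2 ⟨x, hx, y, hy, hxy_dist⟩
  have hδ : δmax ≤ δmin * (b - 1) := by
    rw [← le_sub_iff_add_le, div_le_iff₀ hδmin] at hb
    linarith
  have hb0 : 0 < b := by
    have := div_nonneg (hδmin.le.trans hδmax) hδmin.le
    linarith
  refine eq_of_sum_mul_pow_eq hδmin (fun x hx y hy hxy => hsep ⟨x, hx, y, hy, hxy, rfl⟩)
    (fun x hx y hy => hmax.2 ⟨x, hx, y, hy, rfl⟩) hδ hb0.le hH hH' (mul_left_cancel₀ hb0.ne' ?_)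
  simpa [hbvec, dotProduct, pow_succ', mul_sum, mul_left_comm] using hdot

/-- With `b⃗ = (b, b², …, b^d)`, `q = b⃗/‖b⃗‖₂`, and the scalar RMS-normalization
`g₃(x) = a·x/√(ε + x²)` (`a ≠ 0`, `ε > 0`), the map `H ↦ g₃(Hᵀq)` is injective on `S^d`,
provided `b ≥ δ_max/δ_min + 1`. -/
theorem rmsnorm_readout_injective {d : ℕ} (S : Finset ℝ) (hS : 2 ≤ S.card)
    (δmin δmax b : ℝ)
    (hmin : IsLeast {r : ℝ | ∃ x ∈ S, ∃ y ∈ S, x ≠ y ∧ r = |x - y|} δmin)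
    (hmax : IsGreatest {r : ℝ | ∃ x ∈ S, ∃ y ∈ S, r = |x - y|} δmax)
    (hb : δmax / δmin + 1 ≤ b)
    (a ε : ℝ) (ha : a ≠ 0) (hε : 0 < ε)
    (bvec q : Fin d → ℝ)
    (hbvec : bvec = fun i : Fin d => b ^ ((i : ℕ) + 1))
    (hq : q = (Real.sqrt (bvec ⬝ᵥ bvec))⁻¹ • bvec) :
    Set.InjOn (fun H : Fin d → ℝ => a * (H ⬝ᵥ q) / Real.sqrt (ε + (H ⬝ᵥ q) ^ 2))
      {H : Fin d → ℝ | ∀ i, H i ∈ S} :=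
  rmsnorm_readout_injective_general S δmin δmax b hmin hmax hb a ε ha hε bvec q hbvec hq
end
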